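/- Let Σ be a finite alphabet and let L ⊆ Σ^ω be recognised by a deterministic parity automaton with priorities in [d] = {1,…,d}. Then every tuple ū ∈ (Σ*)^{d+1} of d+1 finite words satisfies ū ≈ ⊥ (and hence so does every longer tuple). -/

import Mathlib

open scoped Classical

noncomputable section

/-! ### Infinite words and the parity condition -/

/-- The minimal value occurring infinitely often in a sequence of priorities;
for (eventually) bounded sequences this is the `liminf`. -/
def minInfOften (pi : ℕ → ℕ) : ℕ := sInf {x : ℕ | ∀ N : ℕ, ∃ n : ℕ, N ≤ n ∧ pi n = x}

/-- The (min-)parity acceptance condition: the liminf of the priorities is even. -/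
def ParityAccept (pi : ℕ → ℕ) : Prop := Even (minInfOften pi)

/-- Prepend a finite word to an infinite word. -/
def prependW {α : Type} (u : List α) (w : ℕ → α) : ℕ → α := fun i =>
  if h : i < u.length then u.get ⟨i, h⟩ else w (i - u.length)

/-- The prefix of length `n` of an infinite word, as a list. -/
def wordPrefix {α : Type} (w : ℕ → α) (n : ℕ) : List α := List.ofFn (fun i : Fin n => w i)

/-- Drop the first `n` letters of an infinite word. -/
def wordDrop {α : Type} (w : ℕ → α) (n : ℕ) : ℕ → α := fun i => w (n + i)

/-- The periodic infinite word `v^ω` (junk if `v = []`). -/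
def perWord {α : Type} [Inhabited α] (v : List α) : ℕ → α := fun i => v.getD (i % v.length) default

/-! ### Layered automata -/

/-- A layered automaton over the alphabet `α` with `d` layers.  The (disjoint) layers
are encoded by the function `layer : Q → [1,d]`; each layer is a deterministic
transition system (partial transition function `δ`, which stays inside the layer);
`μ` sends each state of layer `x+1` to its parent in layer `x` (and is the identity
on layer `1`) and is a morphism of transition systems; layer `1` is complete, carries
the initial state, and all its states are reachable from the initial state. -/
structure Layered (Q α : Type) (d : ℕ) where
  layer : Q → ℕ
  layer_pos : ∀ q, 1 ≤ layer q
  layer_le : ∀ q, layer q ≤ d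
  δ : Q → α → Option Q
  δ_layer : ∀ q a q', δ q a = some q' → layer q' = layer q
  μ : Q → Q
  μ_layer : ∀ q, 1 < layer q → layer (μ q) + 1 = layer q
  μ_id : ∀ q, layer q = 1 → μ q = q
  μ_morph : ∀ q a q', 1 < layer q → δ q a = some q' → δ (μ q) a = some (μ q')
  init : Q
  init_layer : layer init = 1
  complete1 : ∀ q a, layer q = 1 → (δ q a).isSome = true
  reach1 : ∀ q, layer q = 1 →
    Relation.ReflTransGen (fun p p' => layer p = 1 ∧ ∃ a, δ p a = some p') init q

namespace Layered

variable {Q R α : Type} {d d' : ℕ}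

/-- The run of the (deterministic) layer transition systems on a finite word. -/
def runList (A : Layered Q α d) : Q → List α → Option Q
  | q, [] => some q
  | q, a :: u =>
    match A.δ q a with
    | some q' => runList A q' u
    | none => none

/-- `μ̂_x q`: the ancestor of `q` in layer `x` (image under the composed morphisms). -/
def muHat (A : Layered Q α d) (x : ℕ) (q : Q) : Q := (A.μ)^[A.layer q - x] q

/-- A leaf state: a state that is not in the image of any of the morphisms `μ_x`. -/
def IsLeaf (A : Layered Q α d) (q : Q) : Prop := ∀ p, 1 < A.layer p → A.μ p ≠ q

/-- `layer(q,a)`: the largest layer `x ≤ layer q` in which `δ_x (μ̂_x q) a` is defined. -/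
def layerOf (A : Layered Q α d) (q : Q) (a : α) : ℕ :=
  Nat.findGreatest (fun x => (A.δ (A.muHat x q) a).isSome = true) (A.layer q)

/-- A state `p` is an ancestor of `q`. -/
def IsAncestor (A : Layered Q α d) (p q : Q) : Prop :=
  A.layer p ≤ A.layer q ∧ A.muHat (A.layer p) q = p

/-! #### Safe languages and strong acceptance -/

/-- Membership of a finite word in the `x`-safe language of `q`. -/
def SafeFin (A : Layered Q α d) (x : ℕ) (q : Q) (u : List α) : Prop :=
  (A.runList (A.muHat x q) u).isSome = true

/-- Membership of an infinite word in the `x`-safe language of `q`. -/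
def SafeInf (A : Layered Q α d) (x : ℕ) (q : Q) (w : ℕ → α) : Prop :=
  ∀ n : ℕ, A.SafeFin x q (wordPrefix w n)

/-- `w` is strongly accepted by the state `p` (which lies in the even layer `x = layer p`):
`w` is `x`-safe from `p` and no decomposition `w = u·w'` admits a state `p'` of layer `x+1`
with a `u`-run from `p` to the parent of `p'` in `T_x` such that `w'` is `(x+1)`-safe from `p'`. -/
def StronglyAcc (A : Layered Q α d) (p : Q) (w : ℕ → α) : Prop :=
  Even (A.layer p) ∧ A.SafeInf (A.layer p) p w ∧
  ∀ (n : ℕ) (p' : Q), A.layer p' = A.layer p + 1 →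
    A.runList p (wordPrefix w n) = some (A.μ p') →
    ¬ A.SafeInf (A.layer p') p' (wordDrop w n)

/-- `w` is strongly rejected by `p` (lying in an odd layer). -/
def StronglyRej (A : Layered Q α d) (p : Q) (w : ℕ → α) : Prop :=
  Odd (A.layer p) ∧ A.SafeInf (A.layer p) p w ∧
  ∀ (n : ℕ) (p' : Q), A.layer p' = A.layer p + 1 →
    A.runList p (wordPrefix w n) = some (A.μ p') →
    ¬ A.SafeInf (A.layer p') p' (wordDrop w n)

/-- Consistency: no two states with the same layer-1 ancestor strongly accept
resp. strongly reject a common infinite word. -/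
def Consistent (A : Layered Q α d) : Prop :=
  ¬ ∃ (p p' : Q) (w : ℕ → α), A.muHat 1 p = A.muHat 1 p' ∧
      A.StronglyAcc p w ∧ A.StronglyRej p' w

/-- `w` is ultimately safe in layer `x`, for the automaton started in the
layer-1 state `q0`. -/
def UltSafeFrom (A : Layered Q α d) (q0 : Q) (x : ℕ) (w : ℕ → α) : Prop :=
  ∃ (n : ℕ) (p : Q), A.layer p = x ∧
    A.runList q0 (wordPrefix w n) = some (A.muHat 1 p) ∧
    A.SafeInf x p (wordDrop w n)

/-- Layered acceptance from `q0`: the maximal layer in which `w` is ultimately safe is even. -/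
def LayeredAcceptFrom (A : Layered Q α d) (q0 : Q) (w : ℕ → α) : Prop :=
  ∃ x : ℕ, Even x ∧ A.UltSafeFrom q0 x w ∧ ∀ y : ℕ, A.UltSafeFrom q0 y w → y ≤ x

/-- Layered rejection from `q0`: the maximal layer in which `w` is ultimately safe is odd. -/
def LayeredRejectFrom (A : Layered Q α d) (q0 : Q) (w : ℕ → α) : Prop :=
  ∃ x : ℕ, Odd x ∧ A.UltSafeFrom q0 x w ∧ ∀ y : ℕ, A.UltSafeFrom q0 y w → y ≤ x

/-! #### The semantics automaton `⟦A⟧` (a simple-by-priorities alternating parity automaton) -/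

/-- The priority of the letter `a` in the state `q` of `⟦A⟧`. -/
def semPrio (A : Layered Q α d) (q : Q) (a : α) : ℕ := A.layerOf q a

/-- The transitions of `⟦A⟧` (between leaf states): `q —a→ q'` iff, for
`x = layer(q,a)`, we have `δ_x (μ̂_x q) a = μ̂_x q'`; the transition carries priority `x`. -/
def semStep (A : Layered Q α d) (q : Q) (a : α) (q' : Q) : Prop :=
  A.IsLeaf q' ∧ A.δ (A.muHat (A.layerOf q a) q) a = some (A.muHat (A.layerOf q a) q')

/-- Runs of `⟦A⟧` over the infinite word `w`, starting in `p`. -/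
def IsSemRun (A : Layered Q α d) (w : ℕ → α) (p : Q) (ρ : ℕ → Q) : Prop :=
  ρ 0 = p ∧ ∀ i : ℕ, A.semStep (ρ i) (w i) (ρ (i + 1))

/-- The sequence of priorities produced by a run of `⟦A⟧` over `w`. -/
def runPrios (A : Layered Q α d) (w : ℕ → α) (ρ : ℕ → Q) : ℕ → ℕ :=
  fun i => A.semPrio (ρ i) (w i)

/-- A resolver for Eve in `⟦A⟧`: given the history (the finite run so far, as a list of
(state, letter) pairs), the current state and a letter of odd priority, it picks a successor. -/
def EveResolver (A : Layered Q α d) (σ : List (Q × α) → Q → α → Q) : Prop :=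
  ∀ (h : List (Q × α)) (q : Q) (a : α), Odd (A.semPrio q a) → A.semStep q a (σ h q a)

/-- A resolver for Adam in `⟦A⟧` (resolving the even-priority steps). -/
def AdamResolver (A : Layered Q α d) (τ : List (Q × α) → Q → α → Q) : Prop :=
  ∀ (h : List (Q × α)) (q : Q) (a : α), Even (A.semPrio q a) → A.semStep q a (τ h q a)

/-- A run is consistent with the Eve-resolver `σ`: every odd-priority step follows `σ`. -/
def ConsEve (A : Layered Q α d) (σ : List (Q × α) → Q → α → Q) (w : ℕ → α) (ρ : ℕ → Q) : Prop :=
  ∀ i : ℕ, Odd (A.semPrio (ρ i) (w i)) →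
    ρ (i + 1) = σ (List.ofFn fun j : Fin i => (ρ (j : ℕ), w (j : ℕ))) (ρ i) (w i)

/-- A run is consistent with the Adam-resolver `τ`: every even-priority step follows `τ`. -/
def ConsAdam (A : Layered Q α d) (τ : List (Q × α) → Q → α → Q) (w : ℕ → α) (ρ : ℕ → Q) : Prop :=
  ∀ i : ℕ, Even (A.semPrio (ρ i) (w i)) →
    ρ (i + 1) = τ (List.ofFn fun j : Fin i => (ρ (j : ℕ), w (j : ℕ))) (ρ i) (w i)

/-- Acceptance of `w` by `⟦A⟧` from the (leaf) state `p`: Eve has a winning strategy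
in the game `G(⟦A⟧,w)`, i.e. a resolver all of whose consistent runs satisfy parity. -/
def SemAccept (A : Layered Q α d) (p : Q) (w : ℕ → α) : Prop :=
  ∃ σ : List (Q × α) → Q → α → Q, A.EveResolver σ ∧
    ∀ ρ : ℕ → Q, A.IsSemRun w p ρ → A.ConsEve σ w ρ → ParityAccept (A.runPrios w ρ)

/-- Uniform semantic determinism: leaf states with the same layer-1 ancestor
recognise the same language in `⟦A⟧`. -/
def UnifSD (A : Layered Q α d) : Prop :=
  ∀ p q : Q, A.IsLeaf p → A.IsLeaf q → A.muHat 1 p = A.muHat 1 q →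
    ∀ w : ℕ → α, (A.SemAccept p w ↔ A.SemAccept q w)

/-! #### Longest suffix resolvers -/

/-- `v` is a suffix-witness to `r`: the layer of `r` has a run labelled `v` ending in `r`. -/
def suffixReaches (A : Layered Q α d) (r : Q) (v : List α) : Prop :=
  ∃ p : Q, A.layer p = A.layer r ∧ A.runList p v = some r

/-- The length of the longest suffix `v` of `u` such that the layer of `r` has a
run labelled `v` ending in `r`. -/
def longestSuffixLen (A : Layered Q α d) (u : List α) (r : Q) : ℕ :=
  Nat.findGreatest (fun k => k ≤ u.length ∧ A.suffixReaches r (u.drop (u.length - k))) u.length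

/-- A longest suffix resolver for Eve, initialised to `u0`: a valid Eve-resolver that,
at a step of odd priority `x` after having read `v`, moves to an `a`-successor `q'`
maximising the length of the longest `(x+1)`-suffix of `u0·v·a` to `μ̂_{x+1} q'`. -/
def IsLongestSuffixResolverE (A : Layered Q α d) (u0 : List α)
    (σ : List (Q × α) → Q → α → Q) : Prop :=
  A.EveResolver σ ∧
  ∀ (h : List (Q × α)) (q : Q) (a : α), Odd (A.semPrio q a) →
    ∀ q' : Q, A.semStep q a q' →
      A.longestSuffixLen (u0 ++ h.map Prod.snd ++ [a]) (A.muHat (A.semPrio q a + 1) q') ≤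
      A.longestSuffixLen (u0 ++ h.map Prod.snd ++ [a]) (A.muHat (A.semPrio q a + 1) (σ h q a))

/-- A longest suffix resolver for Adam, initialised to `u0` (symmetric, for even priorities). -/
def IsLongestSuffixResolverA (A : Layered Q α d) (u0 : List α)
    (τ : List (Q × α) → Q → α → Q) : Prop :=
  A.AdamResolver τ ∧
  ∀ (h : List (Q × α)) (q : Q) (a : α), Even (A.semPrio q a) →
    ∀ q' : Q, A.semStep q a q' →
      A.longestSuffixLen (u0 ++ h.map Prod.snd ++ [a]) (A.muHat (A.semPrio q a + 1) q') ≤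
      A.longestSuffixLen (u0 ++ h.map Prod.snd ++ [a]) (A.muHat (A.semPrio q a + 1) (τ h q a))

/-! #### The random walk on `⟦A⟧` -/

/-- The uniform step probability of the random walk of `⟦A⟧`. -/
def stepProb (A : Layered Q α d) (q : Q) (a : α) (q' : Q) : ENNReal :=
  if A.semStep q a q' then ((Nat.card {p : Q // A.semStep q a p} : ENNReal))⁻¹ else 0

/-- `m` is the Markov measure of the random walk of `⟦A⟧` over the word `w` started at `p`:
a probability measure on `ℕ → Q` whose cylinder probabilities are the products of the
uniform step probabilities. -/
def IsWalkMeasure [MeasurableSpace Q] (A : Layered Q α d) (w : ℕ → α) (p : Q)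
    (m : MeasureTheory.Measure (ℕ → Q)) : Prop :=
  MeasureTheory.IsProbabilityMeasure m ∧
  ∀ (n : ℕ) (s : Fin (n + 1) → Q),
    m {ρ : ℕ → Q | ∀ i : Fin (n + 1), ρ (i : ℕ) = s i} =
      (if s 0 = p then 1 else 0) *
        ∏ i : Fin n, A.stepProb (s i.castSucc) (w (i : ℕ)) (s i.succ)

/-! #### Normal form, centrality, safe minimality, central sequences -/

/-- Normal form: (N1) every layer `x ≥ 2` is a union of non-trivial SCCs, and
(N2) the safe language of every child is strictly smaller than that of its parent. -/
def NormalForm (A : Layered Q α d) : Prop :=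
  ∀ q : Q, 2 ≤ A.layer q →
    (∀ (u : List α) (q' : Q), A.runList q u = some q' →
      ∃ v : List α, v ≠ [] ∧ A.runList q' v = some q) ∧
    (∀ p : Q, 1 < A.layer p → A.μ p = q →
      ∃ u : List α, (A.runList q u).isSome = true ∧ A.runList p u = none)

/-- Inclusion of `x`-safe languages. -/
def SafeLE (A : Layered Q α d) (x : ℕ) (p q : Q) : Prop :=
  (∀ u : List α, A.SafeFin x p u → A.SafeFin x q u) ∧
  (∀ w : ℕ → α, A.SafeInf x p w → A.SafeInf x q w)

/-- Centralised: siblings (same parent) whose safe languages are included,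
lie in the same SCC of their layer. -/
def Centralised (A : Layered Q α d) : Prop :=
  ∀ p q : Q, 2 ≤ A.layer p → A.layer q = A.layer p →
    A.muHat (A.layer p - 1) p = A.muHat (A.layer p - 1) q →
    A.SafeLE (A.layer p) p q →
    (∃ u : List α, A.runList p u = some q) ∧ (∃ v : List α, A.runList q v = some p)

/-- `L(p) = L(q)`: all leaves above (the layer-1 ancestor of) `p` and all leaves above `q`
recognise the same language in `⟦A⟧`. -/
def LangEq1 (A : Layered Q α d) (p q : Q) : Prop :=
  ∀ l l' : Q, A.IsLeaf l → A.IsLeaf l' → A.muHat 1 l = A.muHat 1 p →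
    A.muHat 1 l' = A.muHat 1 q → ∀ w : ℕ → α, (A.SemAccept l w ↔ A.SemAccept l' w)

/-- The equivalence `p ≈_x q`: language equivalence together with equality of all
`y`-safe languages for `2 ≤ y ≤ x`. -/
def ApproxEq (A : Layered Q α d) (x : ℕ) (p q : Q) : Prop :=
  A.LangEq1 p q ∧ ∀ y : ℕ, 2 ≤ y → y ≤ x →
    ((∀ u : List α, A.SafeFin y p u ↔ A.SafeFin y q u) ∧
     (∀ w : ℕ → α, A.SafeInf y p w ↔ A.SafeInf y q w))

/-- Safe minimality: `≈_x`-equivalent states of the same layer are equal. -/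
def SafeMinimal (A : Layered Q α d) : Prop :=
  ∀ p q : Q, A.layer p = A.layer q → A.ApproxEq (A.layer p) p q → p = q

/-- `z` is a central sequence for the state `p` (of layer `x = layer p`). -/
def IsCentralSeq (A : Layered Q α d) (p : Q) (z : List α) : Prop :=
  z ≠ [] ∧ A.runList p z = some p ∧
  (∀ q : Q, A.layer q = A.layer p →
    A.muHat (A.layer p - 1) q = A.muHat (A.layer p - 1) p →
    (A.runList q z = some p ∨ A.runList q z = none)) ∧
  (∀ q' : Q, A.layer q' = A.layer p + 1 →
    A.muHat (A.layer p - 1) q' = A.muHat (A.layer p - 1) p →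
    A.runList q' z = none)

end Layered

/-! ### Morphisms of layered automata -/

/-- A morphism of layered automata. -/
structure IsLayMorphism {Q R α : Type} {d d' : ℕ} (A : Layered Q α d) (B : Layered R α d')
    (φ : Q → R) : Prop where
  map_init : φ A.init = B.init
  map_step : ∀ q a q', A.δ q a = some q' → B.δ (φ q) a = some (φ q')
  map_anc : ∀ p q, A.IsAncestor p q → B.IsAncestor (φ p) (φ q)

/-- A strong morphism of layered automata additionally preserves non-transitions. -/
def IsStrongLayMorphism {Q R α : Type} {d d' : ℕ} (A : Layered Q α d) (B : Layered R α d')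
    (φ : Q → R) : Prop :=
  IsLayMorphism A B φ ∧ ∀ q a, A.δ q a = none → B.δ (φ q) a = none

/-- An isomorphism of layered automata: a bijection on states that restricts to
isomorphisms of the layer transition systems, preserves the initial state, and
commutes with the morphisms `μ`. -/
structure IsLayIso {Q R α : Type} {d d' : ℕ} (A : Layered Q α d) (B : Layered R α d')
    (φ : Q ≃ R) : Prop where
  map_layer : ∀ q, B.layer (φ q) = A.layer q
  map_init : φ A.init = B.init
  map_mu : ∀ q, φ (A.μ q) = B.μ (φ q)
  map_step : ∀ q a, (A.δ q a).map φ = B.δ (φ q) a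

/-- `L(⟦A⟧) = L(⟦B⟧)`: the semantics automata (with any choice of initial leaf states
above the respective initial states) accept the same infinite words. -/
def SemLangEq {Q R α : Type} {d d' : ℕ} (A : Layered Q α d) (B : Layered R α d') : Prop :=
  ∀ (p : Q) (q : R), A.IsLeaf p → A.muHat 1 p = A.init → B.IsLeaf q → B.muHat 1 q = B.init →
    ∀ w : ℕ → α, (A.SemAccept p w ↔ B.SemAccept q w)

/-! ### Deterministic parity automata -/

/-- A deterministic parity automaton over `α` with priorities in `[1,d]`. -/
structure DPA (Q α : Type) (d : ℕ) where
  init : Q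
  next : Q → α → Q
  prio : Q → α → ℕ
  prio_pos : ∀ q a, 1 ≤ prio q a
  prio_le : ∀ q a, prio q a ≤ d

namespace DPA

variable {Q α : Type} {d : ℕ}

/-- The unique run of a DPA on an infinite word. -/
def run (B : DPA Q α d) (w : ℕ → α) : ℕ → Q
  | 0 => B.init
  | n + 1 => B.next (run B w n) (w n)

/-- Acceptance by a DPA: the priorities along the unique run satisfy parity. -/
def Accepts (B : DPA Q α d) (w : ℕ → α) : Prop :=
  ParityAccept (fun i => B.prio (B.run w i) (w i))

end DPA

/-- `L` is ω-regular: recognised by some deterministic parity automaton. -/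
def IsOmegaRegular {α : Type} (L : Set (ℕ → α)) : Prop :=
  ∃ (n d : ℕ) (B : DPA (Fin n) α d), ∀ w : ℕ → α, w ∈ L ↔ B.Accepts w

/-! ### Nondeterministic coBüchi automata -/

/-- A (complete) nondeterministic coBüchi automaton: transitions carry priorities in `{1,2}`. -/
structure NCA (Q α : Type) where
  init : Q
  trans : Q → α → ℕ → Q → Prop
  prio_mem : ∀ q a x q', trans q a x q' → x = 1 ∨ x = 2
  complete : ∀ q a, ∃ x q', trans q a x q'

namespace NCA

variable {Q α : Type}

/-- Nondeterministic acceptance from the state `q`. -/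
def AcceptFrom (B : NCA Q α) (q : Q) (w : ℕ → α) : Prop :=
  ∃ (ρ : ℕ → Q) (pri : ℕ → ℕ), ρ 0 = q ∧
    (∀ i : ℕ, B.trans (ρ i) (w i) (pri i) (ρ (i + 1))) ∧ ParityAccept pri

/-- Semantic determinism: every `a`-successor of `p` recognises `a⁻¹ L(p)`. -/
def SemDet (B : NCA Q α) : Prop :=
  ∀ p a x q, B.trans p a x q →
    ∀ w : ℕ → α, (B.AcceptFrom q w ↔ B.AcceptFrom p (prependW [a] w))

/-- Safe determinism: all `a`-transitions from a state carry the same priority, and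
there is at most one `a`-transition of priority `2` from each state. -/
def SafeDet (B : NCA Q α) : Prop :=
  (∀ q a x q' x' q'', B.trans q a x q' → B.trans q a x' q'' → x = x') ∧
  (∀ q a q' q'', B.trans q a 2 q' → B.trans q a 2 q'' → q' = q'')

/-- 1-saturation: priority-1 transitions go to all language-equivalent states. -/
def OneSaturated (B : NCA Q α) : Prop :=
  ∀ q a p p', B.trans q a 1 p →
    (∀ w : ℕ → α, (B.AcceptFrom p' w ↔ B.AcceptFrom p w)) → B.trans q a 1 p'

end NCA

/-! ### Simple-by-priorities alternating parity automata (abstract) -/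

/-- A simple-by-priorities alternating parity automaton: a complete transition system
over `α × [1,d]` in which all `a`-transitions from a state carry the same priority. -/
structure SPA (Q α : Type) (d : ℕ) where
  init : Q
  step : Q → α → Q → Prop
  prio : Q → α → ℕ
  prio_pos : ∀ q a, 1 ≤ prio q a
  prio_le : ∀ q a, prio q a ≤ d
  complete : ∀ q a, ∃ q', step q a q'

/-! ### The congruence on tuples of finite words -/

/-- The data of the congruence at one level (tuples of a fixed length,
represented as reversed lists of components: the head is the last component). -/
structure CongrLevel (α : Type) where
  bot : List (List α) → Prop
  eq : List (List α) → List (List α) → Prop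
  ptd : List (List α) → Prop

/-- Concatenate a finite word to the last component of a tuple
(tuples are represented as reversed lists: the head is the last component). -/
def tcat {α : Type} (t : List (List α)) (v : List α) : List (List α) :=
  match t with
  | h :: rest => (h ++ v) :: rest
  | [] => []

/-- Merge the last two components of a tuple. -/
def tmerge {α : Type} (t : List (List α)) : List (List α) :=
  match t with
  | u' :: h :: rest => (h ++ u') :: rest
  | t' => t'

/-- The congruence data at level `n` (handling tuples of length `n+1`), defined by
recursion on the level, following the inductive definition of `≈ ⊥`, `≈` and `pointed`. -/
def congrData {α : Type} [Inhabited α] (L : Set (ℕ → α)) : ℕ → CongrLevel α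
  | 0 =>
    { bot := fun _ => False
      eq := fun t s =>
        match t, s with
        | [u], [v] => ∀ w : ℕ → α, (prependW u w ∈ L ↔ prependW v w ∈ L)
        | _, _ => False
      ptd := fun _ => True }
  | n + 1 =>
    let C := congrData L n
    let bot : List (List α) → Prop := fun t =>
      match t with
      | u' :: ubar =>
        C.bot (tmerge (u' :: ubar)) ∨
        ∀ w : List α, w ≠ [] → C.eq (tcat (tmerge (u' :: ubar)) w) ubar →
          ((prependW ubar.reverse.flatten (perWord (u' ++ w)) ∈ L) ↔ Even (n + 1))
      | [] => True
    let eq : List (List α) → List (List α) → Prop := fun t s =>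
      C.eq (tmerge t) (tmerge s) ∧ ∀ v : List α, (bot (tcat t v) ↔ bot (tcat s v))
    let ptd : List (List α) → Prop := fun t =>
      match t with
      | u' :: ubar =>
        ¬ bot (u' :: ubar) ∧ C.ptd ubar ∧
        ∀ (vbar : List (List α)) (v' : List α), vbar.length = n + 1 → C.ptd vbar →
          C.eq (tcat vbar v') ubar → ¬ bot ((v' ++ u') :: vbar) →
          eq ((v' ++ u') :: vbar) (u' :: ubar)
      | [] => False
    { bot := bot, eq := eq, ptd := ptd }

/-- `t ≈ ⊥` (for a nonempty tuple `t`, in reversed representation). -/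
def TupBot {α : Type} [Inhabited α] (L : Set (ℕ → α)) (t : List (List α)) : Prop :=
  (congrData L (t.length - 1)).bot t

/-- `t ≈ s` (for nonempty tuples of the same length, in reversed representation). -/
def TupEq {α : Type} [Inhabited α] (L : Set (ℕ → α)) (t s : List (List α)) : Prop :=
  t.length = s.length ∧ (congrData L (t.length - 1)).eq t s

/-- `t` is pointed. -/
def TupPointed {α : Type} [Inhabited α] (L : Set (ℕ → α)) (t : List (List α)) : Prop :=
  (congrData L (t.length - 1)).ptd t

/-- `cls` exhibits `A` as (a copy of) the congruence automaton `A_≈` of `L`: its states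
are the `≈`-classes of pointed tuples (the layer being the tuple length), transitions
are given by concatenation in the last component, the initial state is the class of
`(ε)`, and the morphisms are given by merging the last two components. -/
structure IsCongrAut {α : Type} [Inhabited α] (L : Set (ℕ → α)) {Q : Type} {d : ℕ}
    (A : Layered Q α d) (cls : (t : List (List α)) → TupPointed L t → Q) : Prop where
  surj : ∀ q : Q, ∃ (t : List (List α)) (ht : TupPointed L t), cls t ht = q
  cls_eq : ∀ t ht s hs, cls t ht = cls s hs ↔ TupEq L t s
  layer_eq : ∀ t ht, A.layer (cls t ht) = t.length
  init_eq : ∀ h : TupPointed L [([] : List α)], cls [([] : List α)] h = A.init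
  step_some : ∀ t ht (a : α) (h' : TupPointed L (tcat t [a])),
    A.δ (cls t ht) a = some (cls (tcat t [a]) h')
  step_none : ∀ t ht (a : α), TupBot L (tcat t [a]) → A.δ (cls t ht) a = none
  mu_eq : ∀ (u' : List α) (ubar : List (List α)) (h : TupPointed L (u' :: ubar))
    (h' : TupPointed L (tmerge (u' :: ubar))), ubar ≠ [] →
    A.μ (cls (u' :: ubar) h) = cls (tmerge (u' :: ubar)) h'

end

/-!
A tuple `(u₁,…,u_m,u') ≉ ⊥` yields a loop `Ψ` on `v̄ = (u₁,…,u_m)`, i.e. `v̄·Ψ ≈ v̄`, with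
`u₁⋯u_m Ψ^ω ∈ L` iff `m` is odd. Given such a loop `Ψ'` on `(u₁,…,u_{m+1})`, pumping it `K`
times (`K` the number of states of the DPA) keeps the tuple `≉ ⊥`, which yields a loop
`Ψ = u_{m+1} Ψ'^K z` on `(u₁,…,u_m)`.

By induction on `m`, the DPA, after reading a tuple `≈ (u₁,…,u_m)`, cycles on a power of `Ψ`
through priorities `> m` only: by pigeonhole it has a cycle on a power of `Ψ'` inside the block
`Ψ'^K` of the cycle on a power of `Ψ`, so that cycle sees priorities `≥ m + 1` only, and its least
priority has the parity forced by `Ψ'`, opposite to that of `m + 1`. For a tuple `≉ ⊥` with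
`d + 1` components, merging its last components gives the first loop at level `d`, and the
cycle found there has priorities `> d`, which is impossible.
-/

section Words

variable {α : Type}

theorem prependW_nil (w : ℕ → α) : prependW [] w = w := by
  funext i
  simp [prependW]

theorem prependW_cons_zero (a : α) (u : List α) (w : ℕ → α) : prependW (a :: u) w 0 = a := by
  simp [prependW]

theorem prependW_cons_succ (a : α) (u : List α) (w : ℕ → α) (i : ℕ) :
    prependW (a :: u) w (i + 1) = prependW u w i := by
  simp only [prependW, List.length_cons, Nat.add_lt_add_iff_right, List.get_eq_getElem,
    List.getElem_cons_succ, Nat.add_sub_add_right]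

theorem prependW_length_add (u : List α) (w : ℕ → α) (n : ℕ) :
    prependW u w (u.length + n) = w n := by
  simp [prependW]

theorem prependW_append (u v : List α) (w : ℕ → α) :
    prependW (u ++ v) w = prependW u (prependW v w) := by
  induction u with
  | nil => rw [List.nil_append, prependW_nil]
  | cons a u ih =>
    funext i
    cases i with
    | zero => rw [List.cons_append, prependW_cons_zero, prependW_cons_zero]
    | succ i => rw [List.cons_append, prependW_cons_succ, prependW_cons_succ, ih]

theorem flatten_replicate_ne_nil {v : List α} (hv : v ≠ []) {k : ℕ} (hk : k ≠ 0) :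
    (List.replicate k v).flatten ≠ [] := by
  simp [hv, hk]

theorem flatten_replicate_add (v : List α) (j k : ℕ) :
    (List.replicate (j + k) v).flatten =
      (List.replicate j v).flatten ++ (List.replicate k v).flatten := by
  rw [List.replicate_add, List.flatten_append]

theorem List.exists_cons_append_of_lt_length {β : Type} {l : List β} {k : ℕ} (h : k < l.length) :
    ∃ a s V, l = a :: s ++ V ∧ V.length = k := by
  rcases hl : l.take (l.length - k) with _ | ⟨a, s⟩
  · have := congrArg List.length hl
    simp only [List.length_take, List.length_nil] at this
    omega
  · refine ⟨a, s, l.drop (l.length - k), ?_, by simp; omega⟩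
    rw [← hl, List.take_append_drop]

variable [Inhabited α]

theorem prependW_perWord (v : List α) : prependW v (perWord v) = perWord v := by
  funext i
  by_cases hi : i < v.length
  · simp [prependW, perWord, hi, Nat.mod_eq_of_lt hi]
  · simp only [prependW, hi, dite_false, perWord]
    rw [← Nat.mod_eq_sub_mod (not_lt.mp hi)]

theorem eq_perWord_of_prependW_eq {v : List α} (hv : v ≠ []) {x : ℕ → α}
    (hx : prependW v x = x) : x = perWord v := by
  have hpos : 0 < v.length := List.length_pos_iff.mpr hv
  funext i
  induction i using Nat.strong_induction_on with
  | _ i ih =>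
    rw [← hx, ← prependW_perWord v]
    by_cases hi : i < v.length
    · simp [prependW, hi]
    · simp only [prependW, hi, dite_false]
      exact ih _ (by omega)

theorem prependW_flatten_replicate (v : List α) (k : ℕ) :
    prependW (List.replicate k v).flatten (perWord v) = perWord v := by
  induction k with
  | zero => simp [prependW_nil]
  | succ k ih => rw [List.replicate_succ, List.flatten_cons, prependW_append, ih, prependW_perWord v]

theorem perWord_flatten_replicate {v : List α} (hv : v ≠ []) {k : ℕ} (hk : k ≠ 0) :
    perWord (List.replicate k v).flatten = perWord v :=
  (eq_perWord_of_prependW_eq (by simp [hv, hk]) (prependW_flatten_replicate v k)).symm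

end Words

theorem isLeast_minInfOften_of_periodic {f : ℕ → ℕ} {N P : ℕ} (hP : 0 < P)
    (hf : Function.Periodic (fun n => f (N + n)) P) :
    IsLeast {x | ∃ i < P, f (N + i) = x} (minInfOften f) := by
  have hinf : {x | ∀ M : ℕ, ∃ n : ℕ, M ≤ n ∧ f n = x} = {x | ∃ i < P, f (N + i) = x} := by
    ext x
    constructor
    · intro hx
      obtain ⟨n, hn, rfl⟩ := hx N
      refine ⟨(n - N) % P, Nat.mod_lt _ hP, ?_⟩
      have := hf.map_mod_nat (n - N)
      rw [this]
      congr 1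
      omega
    · rintro ⟨i, -, rfl⟩ M
      refine ⟨N + (i + M * P), by nlinarith, ?_⟩
      exact hf.nat_mul M i
  unfold minInfOften
  rw [hinf]
  exact ⟨Nat.sInf_mem ⟨_, 0, hP, rfl⟩, fun x hx => Nat.sInf_le hx⟩

namespace DPA

variable {Q α : Type} {d : ℕ} (B : DPA Q α d)

def stateAfter (q : Q) (v : List α) : Q := v.foldl B.next q

def prioList : Q → List α → List ℕ
  | _, [] => []
  | q, a :: v => B.prio q a :: prioList (B.next q a) v

def runFrom (q : Q) (w : ℕ → α) : ℕ → Q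
  | 0 => q
  | n + 1 => B.next (runFrom q w n) (w n)

theorem stateAfter_append (q : Q) (u v : List α) :
    B.stateAfter q (u ++ v) = B.stateAfter (B.stateAfter q u) v := by
  simp [stateAfter]

theorem prioList_append (q : Q) (u v : List α) :
    B.prioList q (u ++ v) = B.prioList q u ++ B.prioList (B.stateAfter q u) v := by
  induction u generalizing q with
  | nil => rfl
  | cons a u ih => simp [prioList, ih, stateAfter]

theorem prioList_eq_nil_iff {q : Q} {v : List α} : B.prioList q v = [] ↔ v = [] := by
  cases v <;> simp [prioList]

theorem mem_prioList_bounds {q : Q} {v : List α} {p : ℕ} (hp : p ∈ B.prioList q v) :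
    1 ≤ p ∧ p ≤ d := by
  induction v generalizing q with
  | nil => simp [prioList] at hp
  | cons a v ih =>
    rcases List.mem_cons.mp hp with rfl | hp
    · exact ⟨B.prio_pos q a, B.prio_le q a⟩
    · exact ih hp

theorem one_le_of_inhabited [Inhabited α] (B : DPA Q α d) : 1 ≤ d :=
  (B.prio_pos B.init default).trans (B.prio_le B.init default)

theorem run_eq_runFrom (w : ℕ → α) (n : ℕ) : B.run w n = B.runFrom B.init w n := by
  induction n with
  | zero => rfl
  | succ n ih => simp [run, runFrom, ih]

theorem runFrom_succ (q : Q) (w : ℕ → α) (n : ℕ) :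
    B.runFrom q w (n + 1) = B.runFrom (B.next q (w 0)) (fun i => w (i + 1)) n := by
  induction n with
  | zero => rfl
  | succ n ih => rw [runFrom, ih]; rfl

theorem runFrom_cons (q : Q) (a : α) (u : List α) (w : ℕ → α) (n : ℕ) :
    B.runFrom q (prependW (a :: u) w) (n + 1) = B.runFrom (B.next q a) (prependW u w) n := by
  rw [runFrom_succ, prependW_cons_zero]
  simp only [prependW_cons_succ]

theorem runFrom_prependW (q : Q) (u : List α) (w : ℕ → α) (n : ℕ) :
    B.runFrom q (prependW u w) (u.length + n) = B.runFrom (B.stateAfter q u) w n := by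
  induction u generalizing q with
  | nil => simp [prependW_nil, stateAfter]
  | cons a u ih =>
    rw [List.length_cons, show u.length + 1 + n = u.length + n + 1 by omega, runFrom_cons, ih]
    rfl

theorem mem_prioList_iff (q : Q) (v : List α) (w : ℕ → α) (p : ℕ) :
    p ∈ B.prioList q v ↔
      ∃ i < v.length, B.prio (B.runFrom q (prependW v w) i) (prependW v w i) = p := by
  induction v generalizing q with
  | nil => simp [prioList]
  | cons a v ih =>
    simp only [prioList, List.mem_cons, ih, List.length_cons]
    constructor
    · rintro (rfl | ⟨i, hi, rfl⟩)
      · exact ⟨0, by omega, by rw [prependW_cons_zero]; rfl⟩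
      · exact ⟨i + 1, by omega, by rw [runFrom_cons, prependW_cons_succ]⟩
    · rintro ⟨_ | i, hi, rfl⟩
      · left; rw [prependW_cons_zero]; rfl
      · right; exact ⟨i, by omega, by rw [runFrom_cons, prependW_cons_succ]⟩

theorem exists_loop_flatten_replicate [Fintype Q] (q : Q) (v : List α) :
    ∃ j e, 0 < e ∧ j + e ≤ Fintype.card Q ∧
      B.stateAfter (B.stateAfter q (List.replicate j v).flatten) (List.replicate e v).flatten =
        B.stateAfter q (List.replicate j v).flatten := by
  set f : ℕ → Q := fun j => B.stateAfter q (List.replicate j v).flatten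
  obtain ⟨x, y, hxy, hf⟩ := Fintype.exists_ne_map_eq_of_card_lt
    (fun j : Fin (Fintype.card Q + 1) => f j) (by simp)
  have hloop : ∀ j₁ j₂, j₁ < j₂ → f j₁ = f j₂ →
      B.stateAfter (f j₁) (List.replicate (j₂ - j₁) v).flatten = f j₁ := by
    intro j₁ j₂ hlt heq
    conv_rhs => rw [heq]
    simp only [f, ← stateAfter_append, ← flatten_replicate_add]
    congr 3
    omega
  rcases Fin.lt_or_lt_of_ne hxy with h | h
  · exact ⟨x, y - x, by omega, by omega, hloop x y h hf⟩
  · exact ⟨y, x - y, by omega, by omega, hloop y x h hf.symm⟩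

variable [Inhabited α]

theorem isLeast_minInfOften_lasso {g v : List α} (hv : v ≠ [])
    (hloop : B.stateAfter (B.stateAfter B.init g) v = B.stateAfter B.init g) :
    IsLeast {p | p ∈ B.prioList (B.stateAfter B.init g) v}
      (minInfOften fun i => B.prio (B.run (prependW g (perWord v)) i) (prependW g (perWord v) i)) := by
  set q := B.stateAfter B.init g
  have hshift : ∀ n, B.run (prependW g (perWord v)) (g.length + n) = B.runFrom q (perWord v) n :=
    fun n => by rw [run_eq_runFrom, runFrom_prependW]
  have hloopRun : ∀ n, B.runFrom q (perWord v) (v.length + n) = B.runFrom q (perWord v) n := by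
    intro n
    conv_lhs => rw [← prependW_perWord v]
    rw [runFrom_prependW, hloop]
  have hloopWord : ∀ n, perWord v (v.length + n) = perWord v n := by
    intro n
    conv_lhs => rw [← prependW_perWord v]
    rw [prependW_length_add]
  have hper : Function.Periodic (fun n => B.prio (B.run (prependW g (perWord v)) (g.length + n))
      (prependW g (perWord v) (g.length + n))) v.length := by
    intro n
    simp only [hshift, prependW_length_add]
    rw [add_comm n, hloopRun, hloopWord]
  convert isLeast_minInfOften_of_periodic (f := fun i => B.prio (B.run (prependW g (perWord v)) i)
    (prependW g (perWord v) i)) (N := g.length) (List.length_pos_iff.mpr hv) hper using 2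
  ext p
  simp only [mem_prioList_iff B q v (perWord v), prependW_perWord v, hshift,
    prependW_length_add]

theorem succ_le_of_mem_prioList_lasso {g v : List α} {k : ℕ} (hv : v ≠ [])
    (hloop : B.stateAfter (B.stateAfter B.init g) v = B.stateAfter B.init g)
    (hk : ∀ p ∈ B.prioList (B.stateAfter B.init g) v, k ≤ p)
    (hacc : B.Accepts (prependW g (perWord v)) ↔ ¬ Even k) :
    ∀ p ∈ B.prioList (B.stateAfter B.init g) v, k + 1 ≤ p := by
  obtain ⟨hmin, hleast⟩ := B.isLeast_minInfOften_lasso hv hloop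
  have hne : minInfOften (fun i => B.prio (B.run (prependW g (perWord v)) i)
      (prependW g (perWord v) i)) ≠ k := fun h => by
    rw [Accepts, ParityAccept, h] at hacc
    exact (iff_not_self hacc).elim
  intro p hp
  have := hk _ hmin
  have := hleast hp
  omega

end DPA

section Congruence

variable {α : Type}

@[simp] theorem tcat_cons (u v : List α) (t : List (List α)) : tcat (u :: t) v = (u ++ v) :: t :=
  rfl

theorem tcat_nil_right (t : List (List α)) : tcat t [] = t := by
  rcases t with _ | ⟨u, t⟩ <;> simp [tcat]

theorem tcat_tcat (t : List (List α)) (u v : List α) : tcat (tcat t u) v = tcat t (u ++ v) := by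
  rcases t with _ | ⟨w, t⟩ <;> simp [tcat]

theorem tmerge_tcat (t : List (List α)) (v : List α) : tmerge (tcat t v) = tcat (tmerge t) v := by
  rcases t with _ | ⟨u, _ | ⟨w, t⟩⟩ <;> simp [tcat, tmerge]

theorem tmerge_cons {t : List (List α)} (ht : t ≠ []) (v : List α) : tmerge (v :: t) = tcat t v := by
  rcases t with _ | ⟨u, t⟩
  · exact absurd rfl ht
  · rfl

theorem reverse_flatten_tmerge (t : List (List α)) :
    (tmerge t).reverse.flatten = t.reverse.flatten := by
  rcases t with _ | ⟨u, _ | ⟨w, t⟩⟩ <;> simp [tmerge]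

variable [Inhabited α] (L : Set (ℕ → α))

theorem congrData_zero_eq_singleton (u v : List α) :
    (congrData L 0).eq [u] [v] ↔ ∀ w : ℕ → α, (prependW u w ∈ L ↔ prependW v w ∈ L) :=
  Iff.rfl

theorem congrData_succ_bot_cons (n : ℕ) (u : List α) (V : List (List α)) :
    (congrData L (n + 1)).bot (u :: V) ↔ (congrData L n).bot (tmerge (u :: V)) ∨
      ∀ w : List α, w ≠ [] → (congrData L n).eq (tcat (tmerge (u :: V)) w) V →
        (prependW V.reverse.flatten (perWord (u ++ w)) ∈ L ↔ Even (n + 1)) :=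
  Iff.rfl

variable {L}

theorem exists_singleton_of_congrData_zero_eq {t s : List (List α)} (h : (congrData L 0).eq t s) :
    ∃ u v, t = [u] ∧ s = [v] := by
  rcases t with _ | ⟨u, _ | ⟨u', t⟩⟩ <;> rcases s with _ | ⟨v, _ | ⟨v', s⟩⟩ <;>
    first
      | exact ⟨u, v, rfl, rfl⟩
      | exact h.elim

theorem congrData_eq_ne_nil : ∀ {n : ℕ} {t s : List (List α)},
    (congrData L n).eq t s → t ≠ [] ∧ s ≠ []
  | 0, _, _, h => by
    obtain ⟨u, v, rfl, rfl⟩ := exists_singleton_of_congrData_zero_eq h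
    simp
  | n + 1, t, s, h => by
    obtain ⟨ht, hs⟩ := congrData_eq_ne_nil (n := n) h.1
    exact ⟨fun h => ht (by simp [h, tmerge]), fun h => hs (by simp [h, tmerge])⟩

theorem congrData_eq_symm : ∀ {n : ℕ} {t s : List (List α)},
    (congrData L n).eq t s → (congrData L n).eq s t
  | 0, _, _, h => by
    obtain ⟨u, v, rfl, rfl⟩ := exists_singleton_of_congrData_zero_eq h
    exact fun w => (h w).symm
  | _ + 1, _, _, h => ⟨congrData_eq_symm h.1, fun v => (h.2 v).symm⟩

theorem congrData_eq_trans : ∀ {n : ℕ} {t s r : List (List α)},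
    (congrData L n).eq t s → (congrData L n).eq s r → (congrData L n).eq t r
  | 0, _, _, _, h, h' => by
    obtain ⟨u, v, rfl, rfl⟩ := exists_singleton_of_congrData_zero_eq h
    obtain ⟨v', x, hv, rfl⟩ := exists_singleton_of_congrData_zero_eq h'
    obtain rfl := List.singleton_inj.mp hv
    exact fun w => (h w).trans (h' w)
  | _ + 1, _, _, _, h, h' => ⟨congrData_eq_trans h.1 h'.1, fun v => (h.2 v).trans (h'.2 v)⟩

theorem congrData_eq_tcat : ∀ {n : ℕ} {t s : List (List α)} (v : List α),
    (congrData L n).eq t s → (congrData L n).eq (tcat t v) (tcat s v)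
  | 0, _, _, v, h => by
    obtain ⟨u, u', rfl, rfl⟩ := exists_singleton_of_congrData_zero_eq h
    intro w
    simpa only [prependW_append] using h (prependW v w)
  | _ + 1, _, _, v, h => by
    refine ⟨?_, fun z => ?_⟩
    · rw [tmerge_tcat, tmerge_tcat]
      exact congrData_eq_tcat v h.1
    · rw [tcat_tcat, tcat_tcat]
      exact h.2 (v ++ z)

theorem congrData_bot_iff_of_eq {n : ℕ} {t s : List (List α)} (h : (congrData L n).eq t s) :
    (congrData L n).bot t ↔ (congrData L n).bot s := by
  cases n with
  | zero => exact Iff.rfl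
  | succ n =>
    have := h.2 []
    rwa [tcat_nil_right, tcat_nil_right] at this

theorem mem_iff_of_congrData_eq : ∀ {n : ℕ} {t s : List (List α)}, (congrData L n).eq t s →
    ∀ w : ℕ → α, (prependW t.reverse.flatten w ∈ L ↔ prependW s.reverse.flatten w ∈ L)
  | 0, _, _, h => by
    obtain ⟨u, v, rfl, rfl⟩ := exists_singleton_of_congrData_zero_eq h
    simpa using (congrData_zero_eq_singleton L u v).mp h
  | _ + 1, _, _, h => by
    simpa only [reverse_flatten_tmerge] using mem_iff_of_congrData_eq h.1

theorem congrData_bot_tcat : ∀ {n : ℕ} {t : List (List α)} (v : List α),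
    (congrData L n).bot t → (congrData L n).bot (tcat t v)
  | 0, _, _, h => h.elim
  | _ + 1, [], _, h => h
  | _ + 1, u :: V, v, h => by
    rw [congrData_succ_bot_cons] at h
    rw [tcat_cons, congrData_succ_bot_cons]
    rcases h with h | h
    · left
      simpa only [← tcat_cons, tmerge_tcat] using congrData_bot_tcat v h
    · right
      intro w hw heq
      rw [← tcat_cons, tmerge_tcat, tcat_tcat] at heq
      simpa only [List.append_assoc] using h (v ++ w) (by simp [hw]) heq

theorem congrData_not_bot_tmerge {n : ℕ} {t : List (List α)}
    (h : ¬ (congrData L (n + 1)).bot t) : ¬ (congrData L n).bot (tmerge t) := by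
  rcases t with _ | ⟨u, V⟩
  · exact (h trivial).elim
  · exact fun hb => h (Or.inl hb)

theorem congrData_not_bot_of_cons {n : ℕ} {u : List α} {V : List (List α)} (hV : V ≠ [])
    (h : ¬ (congrData L (n + 1)).bot (u :: V)) : ¬ (congrData L n).bot V := by
  have := congrData_not_bot_tmerge h
  rw [tmerge_cons hV] at this
  exact fun hb => this (congrData_bot_tcat u hb)

theorem congrData_bot_cons_of_eq {n : ℕ} {V V' : List (List α)} (h : (congrData L n).eq V V')
    (u : List α) (hb : (congrData L (n + 1)).bot (u :: V)) :
    (congrData L (n + 1)).bot (u :: V') := by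
  obtain ⟨hV, hV'⟩ := congrData_eq_ne_nil h
  rw [congrData_succ_bot_cons, tmerge_cons hV] at hb
  rw [congrData_succ_bot_cons, tmerge_cons hV']
  rcases hb with hb | hb
  · exact Or.inl ((congrData_bot_iff_of_eq (congrData_eq_tcat u h)).mp hb)
  · right
    intro w hw heq
    rw [tcat_tcat] at heq
    have hVloop : (congrData L n).eq (tcat V (u ++ w)) V :=
      congrData_eq_trans (congrData_eq_trans (congrData_eq_tcat _ h) heq) (congrData_eq_symm h)
    rw [← mem_iff_of_congrData_eq h]
    exact hb w hw (by rw [tcat_tcat]; exact hVloop)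

theorem congrData_eq_cons {n : ℕ} {V V' : List (List α)} (h : (congrData L n).eq V V')
    (u : List α) : (congrData L (n + 1)).eq (u :: V) (u :: V') := by
  obtain ⟨hV, hV'⟩ := congrData_eq_ne_nil h
  refine ⟨?_, fun v => ?_⟩
  · rw [tmerge_cons hV, tmerge_cons hV']
    exact congrData_eq_tcat u h
  · simp only [tcat_cons]
    exact ⟨congrData_bot_cons_of_eq h _, congrData_bot_cons_of_eq (congrData_eq_symm h) _⟩

theorem congrData_eq_tcat_flatten_replicate {n : ℕ} {V : List (List α)} {Ψ : List α}
    (h : (congrData L n).eq (tcat V Ψ) V) (j : ℕ) :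
    (congrData L n).eq (tcat V (List.replicate j Ψ).flatten) V := by
  induction j with
  | zero => simpa [tcat_nil_right] using congrData_eq_trans (congrData_eq_symm h) h
  | succ j ih =>
    rw [List.replicate_succ', List.flatten_append, List.flatten_singleton, ← tcat_tcat]
    exact congrData_eq_trans (congrData_eq_tcat Ψ ih) h

end Congruence

section Lassos

variable {α : Type} [Inhabited α] (L : Set (ℕ → α))

/-- `Ψ = u_{x+1} w` for a word `w` refuting `(V, u_{x+1}) ≈ ⊥`, where `V` has length `x = n + 1`. -/
def IsWitnessLoop (n : ℕ) (V : List (List α)) (Ψ : List α) : Prop :=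
  Ψ ≠ [] ∧ (congrData L n).eq (tcat V Ψ) V ∧
    (prependW V.reverse.flatten (perWord Ψ) ∈ L ↔ ¬ Even (n + 1))

def HasLassoAbove {Q : Type} {d : ℕ} (B : DPA Q α d) (n : ℕ) (V : List (List α)) (Ψ : List α)
    (k : ℕ) : Prop :=
  ∃ S : List (List α), (congrData L n).eq S V ∧ ∃ e, 0 < e ∧
    B.stateAfter (B.stateAfter B.init S.reverse.flatten) (List.replicate e Ψ).flatten =
      B.stateAfter B.init S.reverse.flatten ∧
    ∀ p ∈ B.prioList (B.stateAfter B.init S.reverse.flatten) (List.replicate e Ψ).flatten, k ≤ p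

variable {L}

theorem exists_isWitnessLoop {n : ℕ} {u : List α} {V : List (List α)} (hV : V ≠ [])
    (h : ¬ (congrData L (n + 1)).bot (u :: V)) : ∃ z, IsWitnessLoop L n V (u ++ z) := by
  rw [congrData_succ_bot_cons, tmerge_cons hV] at h
  simp only [not_or, not_forall] at h
  obtain ⟨-, w, hw, heq, hmem⟩ := h
  exact ⟨w, by simp [hw], by rwa [tcat_tcat] at heq, (not_iff_comm.mp (not_iff.mp hmem)).symm⟩

variable {Q : Type} {d : ℕ} {B : DPA Q α d}

theorem HasLassoAbove.succ (hB : ∀ w, w ∈ L ↔ B.Accepts w) {n : ℕ} {V : List (List α)}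
    {Ψ : List α} (hΨ : IsWitnessLoop L n V Ψ) (h : HasLassoAbove L B n V Ψ (n + 1)) :
    HasLassoAbove L B n V Ψ (n + 2) := by
  obtain ⟨S, hS, e, he, hloop, hprio⟩ := h
  refine ⟨S, hS, e, he, hloop,
    B.succ_le_of_mem_prioList_lasso (flatten_replicate_ne_nil hΨ.1 he.ne') hloop hprio ?_⟩
  rw [← hB, perWord_flatten_replicate hΨ.1 he.ne', mem_iff_of_congrData_eq hS]
  exact hΨ.2.2

theorem hasLassoAbove_singleton [Fintype Q] (hB : ∀ w, w ∈ L ↔ B.Accepts w) {x Ψ : List α}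
    (hΨ : IsWitnessLoop L 0 [x] Ψ) : HasLassoAbove L B 0 [x] Ψ 2 := by
  obtain ⟨j, e, he, -, hloop⟩ := B.exists_loop_flatten_replicate (B.stateAfter B.init x) Ψ
  refine HasLassoAbove.succ hB hΨ ⟨[x ++ (List.replicate j Ψ).flatten],
    congrData_eq_tcat_flatten_replicate hΨ.2.1 j, e, he, ?_,
    fun p hp => (B.mem_prioList_bounds hp).1⟩
  simpa [DPA.stateAfter_append] using hloop

theorem HasLassoAbove.nested [Fintype Q] {n k : ℕ} {V : List (List α)} {b z Ψ : List α}
    (hΨ : (congrData L (n + 1)).eq (tcat (b :: V) Ψ) (b :: V))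
    (h : HasLassoAbove L B n V (b ++ (List.replicate (Fintype.card Q) Ψ).flatten ++ z) k) :
    HasLassoAbove L B (n + 1) (b :: V) Ψ k := by
  obtain ⟨S, hS, e, he, -, hprio⟩ := h
  set q := B.stateAfter B.init S.reverse.flatten
  obtain ⟨j, e', he', hje, hloop⟩ := B.exists_loop_flatten_replicate (B.stateAfter q b) Ψ
  have hq' : B.stateAfter B.init ((b ++ (List.replicate j Ψ).flatten) :: S).reverse.flatten =
      B.stateAfter (B.stateAfter q b) (List.replicate j Ψ).flatten := by
    simp [q, DPA.stateAfter_append]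
  refine ⟨(b ++ (List.replicate j Ψ).flatten) :: S,
    congrData_eq_trans (congrData_eq_cons hS _) (congrData_eq_tcat_flatten_replicate hΨ j),
    e', he', by rw [hq']; exact hloop, ?_⟩
  rw [hq']
  intro p hp
  apply hprio
  obtain ⟨e₀, rfl⟩ : ∃ e₀, e = e₀ + 1 := ⟨e - 1, by omega⟩
  obtain ⟨r, hr⟩ : ∃ r, Fintype.card Q = j + e' + r := ⟨Fintype.card Q - j - e', by omega⟩
  have hsplit : ∀ R, b ++ (List.replicate (Fintype.card Q) Ψ).flatten ++ z ++ R =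
      (b ++ (List.replicate j Ψ).flatten) ++
        ((List.replicate e' Ψ).flatten ++ ((List.replicate r Ψ).flatten ++ z ++ R)) := by
    intro R
    rw [hr, flatten_replicate_add, flatten_replicate_add]
    simp only [List.append_assoc]
  rw [List.replicate_succ, List.flatten_cons, hsplit, B.prioList_append q (b ++ _),
    B.prioList_append _ (List.replicate e' Ψ).flatten, DPA.stateAfter_append]
  exact List.mem_append_right _ (List.mem_append_left _ hp)

theorem hasLassoAbove_of_isWitnessLoop [Fintype Q] (hB : ∀ w, w ∈ L ↔ B.Accepts w) :
    ∀ (n : ℕ) (V : List (List α)), V.length = n + 1 → ¬ (congrData L n).bot V →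
      ∀ Ψ, IsWitnessLoop L n V Ψ → HasLassoAbove L B n V Ψ (n + 2)
  | 0, V, hV, _, _, hΨ => by
    obtain ⟨x, rfl⟩ := List.length_eq_one_iff.mp hV
    exact hasLassoAbove_singleton hB hΨ
  | _ + 1, [], hV, _, _, _ => by simp at hV
  | n + 1, b :: V, hV, hbot, Ψ, hΨ => by
    have hVne : V ≠ [] := by rintro rfl; simp at hV
    have hpump := congrData_eq_tcat_flatten_replicate hΨ.2.1 (Fintype.card Q)
    obtain ⟨z, hz⟩ := exists_isWitnessLoop hVne
      (fun hb => hbot ((congrData_bot_iff_of_eq hpump).mp hb))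
    have hout := hasLassoAbove_of_isWitnessLoop hB n V (by simpa using hV)
      (congrData_not_bot_of_cons hVne hbot) _ hz
    exact HasLassoAbove.succ hB hΨ (HasLassoAbove.nested hΨ.2.1 hout)

end Lassos

theorem congrData_not_bot_merge {α : Type} [Inhabited α] {L : Set (ℕ → α)} :
    ∀ (s : List (List α)) (a : List α) (V : List (List α)),
      ¬ (congrData L (s.length + V.length)).bot (a :: s ++ V) →
        ¬ (congrData L V.length).bot ((a :: s).reverse.flatten :: V)
  | [], a, V, h => by simpa using h
  | b :: s, a, V, h => by
    have := congrData_not_bot_merge s (b ++ a) V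
      (congrData_not_bot_tmerge (n := s.length + V.length) (by simpa [Nat.add_right_comm] using h))
    simpa using this

theorem statement_17_general {α : Type} [Inhabited α]
    (L : Set (ℕ → α)) {QB : Type} [Fintype QB] {d : ℕ}
    (B : DPA QB α d) (hB : ∀ w : ℕ → α, w ∈ L ↔ B.Accepts w) :
    ∀ t : List (List α), d + 1 ≤ t.length → TupBot L t := by
  intro t ht
  by_contra hbot
  obtain ⟨n, rfl⟩ : ∃ n, d = n + 1 := ⟨d - 1, by have := B.one_le_of_inhabited; omega⟩
  obtain ⟨a, s, V, rfl, hV⟩ := List.exists_cons_append_of_lt_length (k := n + 1) ht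
  have hVne : V ≠ [] := by rintro rfl; simp at hV
  have htop : ¬ (congrData L (n + 1)).bot ((a :: s).reverse.flatten :: V) := by
    rw [← hV]
    exact congrData_not_bot_merge s a V (by simpa [TupBot, Nat.add_comm] using hbot)
  obtain ⟨z, hz⟩ := exists_isWitnessLoop hVne htop
  obtain ⟨S, -, e, he, -, hprio⟩ := hasLassoAbove_of_isWitnessLoop (B := B) hB n V hV
    (congrData_not_bot_of_cons hVne htop) _ hz
  obtain ⟨p, hp⟩ := List.exists_mem_of_ne_nil _
    (B.prioList_eq_nil_iff.not.mpr (flatten_replicate_ne_nil hz.1 he.ne'))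
  have := hprio p hp
  have := (B.mem_prioList_bounds hp).2
  omega

/-- If `L` is recognised by a deterministic parity automaton with
priorities in `[1,d]`, then every tuple of length `d+1` (and hence every longer tuple)
satisfies `ū ≈ ⊥`. -/
theorem statement_17 {α : Type} [Fintype α] [Inhabited α]
    (L : Set (ℕ → α)) {QB : Type} [Fintype QB] {d : ℕ}
    (B : DPA QB α d) (hB : ∀ w : ℕ → α, w ∈ L ↔ B.Accepts w) :
    ∀ t : List (List α), d + 1 ≤ t.length → TupBot L t :=
  statement_17_general L B hB
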